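/- Let T = L₁L₂U be a tetradiagonal Hessenberg matrix with PBF and T̂̂ := UL₁L₂ its second Darboux transform. Then the entries of T̂̂ are: diagonal entries α_{3n+3} + α_{3n+2} + α_{3n+1}, first subdiagonal α_{3n+1}α_{3n} + α_{3n+2}α_{3n} + α_{3n+1}α_{3n-1}, second subdiagonal α_{3n+1}α_{3n-1}α_{3n-3}, superdiagonal 1; with α_k = 0 for k ≤ 0. -/
import Mathlib


/-- Entrywise product of semi-infinite (banded) matrices; the truncation range
`i + j + 2` covers all nonzero terms for the banded matrices considered here. -/
def matMul (A B : ℕ → ℕ → ℝ) : ℕ → ℕ → ℝ :=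
  fun i j => ∑ k ∈ Finset.range (i + j + 2), A i k * B k j

/-- Lower bidiagonal unitriangular `L₁`, entry `α (3n+2)` at `(n+1, n)`. -/
def L1mat (α : ℤ → ℝ) : ℕ → ℕ → ℝ :=
  fun i j => if i = j then 1 else if i = j + 1 then α (3 * (j : ℤ) + 2) else 0

/-- Lower bidiagonal unitriangular `L₂`, entry `α (3n+3)` at `(n+1, n)`. -/
def L2mat (α : ℤ → ℝ) : ℕ → ℕ → ℝ :=
  fun i j => if i = j then 1 else if i = j + 1 then α (3 * (j : ℤ) + 3) else 0

/-- Upper bidiagonal `U`, diagonal `α (3n+1)`, unit superdiagonal. -/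
def Umat (α : ℤ → ℝ) : ℕ → ℕ → ℝ :=
  fun i j => if i = j then α (3 * (j : ℤ) + 1) else if j = i + 1 then 1 else 0

lemma sum_two (n a b : ℕ) (f : ℕ → ℝ) (ha : a < n) (hb : b < n) (hab : a ≠ b)
    (h : ∀ k, k ≠ a → k ≠ b → f k = 0) :
    ∑ k ∈ Finset.range n, f k = f a + f b := by
  have : ∀ k ∈ Finset.range n,
      f k = (if k = a then f a else 0) + (if k = b then f b else 0) := by
    intro k _
    by_cases h1 : k = a
    · subst h1; simp [hab]
    · by_cases h2 : k = b
      · subst h2; simp [h1]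
      · simp [h1, h2, h k h1 h2]
  rw [Finset.sum_congr rfl this, Finset.sum_add_distrib,
    Finset.sum_ite_eq' _ a, Finset.sum_ite_eq' _ b]
  simp [Finset.mem_range.mpr ha, Finset.mem_range.mpr hb]

lemma mulU (α : ℤ → ℝ) (B : ℕ → ℕ → ℝ) (i j : ℕ) :
    matMul (Umat α) B i j = α (3 * (i : ℤ) + 1) * B i j + B (i + 1) j := by
  unfold matMul
  rw [sum_two (i + j + 2) i (i + 1) _ (by omega) (by omega) (by omega)]
  · simp [Umat]
  · intro k h1 h2
    have : ¬ i = k ∧ ¬ k = i + 1 := by omega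
    simp [Umat, this.1, this.2]

lemma mulL2 (α : ℤ → ℝ) (A : ℕ → ℕ → ℝ) (i j : ℕ) :
    matMul A (L2mat α) i j = A i j + α (3 * (j : ℤ) + 3) * A i (j + 1) := by
  unfold matMul
  rw [sum_two (i + j + 2) j (j + 1) _ (by omega) (by omega) (by omega)]
  · simp [L2mat]; ring
  · intro k h1 h2
    have : ¬ k = j ∧ ¬ k = j + 1 := by omega
    simp [L2mat, this.1, this.2]

theorem stmt10 (α : ℤ → ℝ) (hα0 : ∀ k : ℤ, k ≤ 0 → α k = 0)
    (hαpos : ∀ k : ℤ, 1 ≤ k → 0 < α k) :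
    ∀ i j : ℕ, matMul (matMul (Umat α) (L1mat α)) (L2mat α) i j =
      if i = j then α (3 * (i : ℤ) + 3) + α (3 * (i : ℤ) + 2) + α (3 * (i : ℤ) + 1)
      else if i = j + 1 then
        α (3 * (i : ℤ) + 1) * α (3 * (i : ℤ)) + α (3 * (i : ℤ) + 2) * α (3 * (i : ℤ)) +
          α (3 * (i : ℤ) + 1) * α (3 * (i : ℤ) - 1)
      else if i = j + 2 then α (3 * (i : ℤ) + 1) * α (3 * (i : ℤ) - 1) * α (3 * (i : ℤ) - 3)
      else if j = i + 1 then 1 else 0 := by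
  intro i j
  rw [mulL2, mulU, mulU]
  simp only [L1mat]
  rcases eq_or_ne i j with rfl | h0
  · simp; push_cast; ring_nf
    split_ifs with h <;> [omega; ring]
  · rcases eq_or_ne i (j + 1) with rfl | h1
    · have hne : ¬ (j + 1 = j) := by omega
      simp [hne]; push_cast
      split_ifs <;> first | omega | (push_cast; ring)
    · rcases eq_or_ne i (j + 2) with rfl | h2
      · have e1 : ¬ (j + 2 = j) := by omega
        have e2 : ¬ (j + 2 = j + 1) := by omega
        simp [e1, e2]
        split_ifs <;> first | omega | (push_cast; ring)
      · rcases eq_or_ne j (i + 1) with rfl | h3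
        · simp [h0, h1, h2]
          all_goals split_ifs <;> first | omega | (push_cast; ring)
        · have e1 : ¬ (i = j) := h0
          have e2 : ¬ (i + 1 = j) := by
            intro h; exact h3 h.symm
          simp [e1, e2, h1, h2, h3]
          all_goals split_ifs <;> first | omega | (push_cast; ring)
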